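/- arXiv:math/0404031 — 3 statements merged into one kernel-verified Lean document; each statement's English description precedes it below -/
import Mathlib

section
/- Let p be a prime and let D be a divisible p-torsion abelian group. If Hom(ℤ/p, D) is finite, then D is isomorphic to a finite direct sum of copies of the Prüfer p-group ℤ(p^∞), i.e. D ≅ (ℤ(p^∞))^k for some natural number k. -/
/-- The rationals modulo the integers, `ℚ/ℤ`. -/
def QModZ : Type := ℚ ⧸ AddSubgroup.zmultiples (1 : ℚ)

noncomputable instance : AddCommGroup QModZ :=
  QuotientAddGroup.Quotient.addCommGroup _

/-- The Prüfer `p`-group `ℤ(p^∞)`, realized as the `p`-primary torsion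
subgroup of `ℚ/ℤ`. -/
noncomputable def PruferGroup (p : ℕ) [Fact p.Prime] : AddSubgroup QModZ :=
  AddCommGroup.primaryComponent QModZ p

namespace PruferAux
noncomputable def mkQ : ℚ →+ QModZ := QuotientAddGroup.mk' _
lemma mkQ_surjective : Function.Surjective mkQ := QuotientAddGroup.mk'_surjective _
lemma mkQ_eq_zero {q : ℚ} : mkQ q = 0 ↔ ∃ z : ℤ, (z : ℚ) = q := by
  constructor
  · intro h
    have h2 := (QuotientAddGroup.eq_zero_iff (N := AddSubgroup.zmultiples (1:ℚ)) q).mp h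
    rcases AddSubgroup.mem_zmultiples_iff.mp h2 with ⟨k, hk⟩
    exact ⟨k, by simpa using hk⟩
  · rintro ⟨z, rfl⟩
    exact (QuotientAddGroup.eq_zero_iff _).mpr
      (AddSubgroup.mem_zmultiples_iff.mpr ⟨z, by simp⟩)
lemma nsmul_mkQ (n : ℕ) (q : ℚ) : n • mkQ q = mkQ (n * q) := by
  rw [← map_nsmul]; congr 1
lemma zsmul_mkQ (z : ℤ) (q : ℚ) : z • mkQ q = mkQ (z * q) := by
  rw [← map_zsmul]; congr 1
variable (p : ℕ) [hp : Fact p.Prime]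
lemma mem_prufer {x : QModZ} {j : ℕ} (h : p ^ j • x = 0) : x ∈ PruferGroup p := by
  have hd : addOrderOf x ∣ p ^ j := addOrderOf_dvd_of_nsmul_eq_zero h
  rcases (Nat.dvd_prime_pow hp.out).mp hd with ⟨i, _, hi⟩
  exact ⟨j, h⟩
lemma prufer_tors (x : PruferGroup p) : ∃ n : ℕ, p ^ n • x = 0 := by
  rcases x.2 with ⟨n, hn⟩
  refine ⟨n, Subtype.ext ?_⟩
  push_cast
  rw [← hn]

lemma prufer_div (x : PruferGroup p) {n : ℕ} (hn : n ≠ 0) :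
    ∃ y : PruferGroup p, n • y = x := by
  rcases x.2 with ⟨k, hk⟩
  have hxk : p ^ k • (x : QModZ) = 0 := by rw [← hk]
  rcases Nat.eq_zero_or_pos k with hk0 | hk0
  · subst hk0
    have : (x : QModZ) = 0 := by simpa using hxk
    refine ⟨0, Subtype.ext ?_⟩
    simp [this]
  rcases mkQ_surjective (x : QModZ) with ⟨q, hq⟩
  set a := n.factorization p with ha
  set m := n / p ^ a with hm
  have hmn : p ^ a * m = n := Nat.ordProj_mul_ordCompl_eq_self n p
  have hpm : ¬ p ∣ m := Nat.not_dvd_ordCompl hp.out hn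
  have hcop : Nat.Coprime m (p ^ k) :=
    Nat.Coprime.pow_right k ((hp.out.coprime_iff_not_dvd.mpr hpm).symm)
  have hpk1 : 1 < p ^ k := Nat.one_lt_pow (by omega) hp.out.one_lt
  obtain ⟨u, -, hu⟩ := Nat.exists_mul_mod_eq_one_of_coprime hcop hpk1
  have hpa : (p : ℚ) ^ a ≠ 0 := by
    exact_mod_cast pow_ne_zero a (Nat.cast_ne_zero.mpr hp.out.ne_zero)
  set z : QModZ := mkQ (q / p ^ a) with hz
  have hza : p ^ a • z = (x : QModZ) := by
    rw [hz, nsmul_mkQ]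
    have h3 : ((p ^ a : ℕ) : ℚ) * (q / (p:ℚ) ^ a) = q := by
      push_cast; exact mul_div_cancel₀ q hpa
    rw [h3, hq]
  have hzP : z ∈ PruferGroup p := by
    apply mem_prufer p (j := k + a)
    rw [pow_add, ← smul_smul, hza, hxk]
  have key : (m * u) • (x : QModZ) = x := by
    have h1 : p ^ k * (m * u / p ^ k) + 1 = m * u := by
      conv_rhs => rw [← Nat.div_add_mod (m * u) (p ^ k)]
      rw [hu]
    calc (m * u) • (x : QModZ) = (p ^ k * (m * u / p ^ k) + 1) • (x : QModZ) := by rw [h1]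
      _ = (m * u / p ^ k) • (p ^ k • (x : QModZ)) + (x : QModZ) := by
          rw [add_nsmul, one_nsmul, smul_smul, mul_comm]
      _ = x := by rw [hxk, smul_zero, zero_add]
  have main : n • u • z = (x : QModZ) := by
    calc n • u • z = (n * u) • z := smul_smul n u z
      _ = ((m * u) * p ^ a) • z := by rw [show n * u = (m * u) * p ^ a by rw [← hmn]; ring]
      _ = (m * u) • (p ^ a • z) := by rw [← smul_smul]
      _ = (m * u) • (x : QModZ) := by rw [hza]
      _ = x := key
  refine ⟨u • ⟨z, hzP⟩, Subtype.ext ?_⟩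
  push_cast
  exact main

noncomputable instance : DivisibleBy (PruferGroup p) ℕ :=
  divisibleByOfSMulRightSurj _ _ fun {n} hn x => prufer_div p x hn

noncomputable instance (k : ℕ) : DivisibleBy (Fin k → PruferGroup p) ℤ :=
  AddGroup.divisibleByIntOfDivisibleByNat _

lemma hpQ : (p : ℚ) ≠ 0 := Nat.cast_ne_zero.mpr hp.out.ne_zero

lemma zsmul_one_div_p (z : ℤ) : z • mkQ (1 / p) = 0 ↔ (p : ℤ) ∣ z := by
  rw [zsmul_mkQ]
  constructor
  · intro h
    rcases mkQ_eq_zero.mp h with ⟨w, hw⟩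
    have h2 : (((p : ℤ) * w : ℤ) : ℚ) = ((z : ℤ) : ℚ) := by
      push_cast
      rw [hw]
      field_simp [hpQ p]
    exact ⟨w, (Int.cast_injective h2).symm⟩
  · rintro ⟨c, rfl⟩
    apply mkQ_eq_zero.mpr ⟨c, ?_⟩
    push_cast
    rw [mul_one_div]
    exact (mul_div_cancel_left₀ _ (hpQ p)).symm

noncomputable def gp : PruferGroup p :=
  ⟨mkQ (1 / p), mem_prufer p (j := 1) (by
    have h : ((p : ℕ) : ℤ) • mkQ (1 / p) = 0 := (zsmul_one_div_p p _).mpr dvd_rfl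
    rw [natCast_zsmul] at h
    rw [pow_one]
    exact h)⟩

noncomputable def sigma : ZMod p →+ PruferGroup p :=
  ZMod.lift p ⟨zmultiplesHom _ (gp p), Subtype.ext (by
    show ((p : ℤ) • gp p : PruferGroup p).1 = 0
    push_cast
    exact (zsmul_one_div_p p _).mpr dvd_rfl)⟩

lemma sigma_coe (z : ℤ) : sigma p (z : ZMod p) = z • gp p := by
  rw [sigma, ZMod.lift_coe]
  rfl

lemma sigma_injective : Function.Injective (sigma p) := by
  rw [injective_iff_map_eq_zero]
  intro c hc
  have hcv : ((c.val : ℤ) : ZMod p) = c := by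
    push_cast
    simp [ZMod.natCast_val, ZMod.cast_id]
  rw [← hcv, sigma_coe] at hc
  have hc2 : (c.val : ℤ) • mkQ (1 / p) = 0 := by
    have := congrArg Subtype.val hc
    push_cast at this
    exact this
  have h2 : (p : ℤ) ∣ (c.val : ℤ) := (zsmul_one_div_p p _).mp hc2
  have h3 : p ∣ c.val := Int.ofNat_dvd.mp h2
  have h4 : c.val = 0 := Nat.eq_zero_of_dvd_of_lt h3 (ZMod.val_lt c) |>.symm ▸ rfl
  rw [← hcv, h4]
  simp

lemma sigma_surj_on_torsion (y : PruferGroup p) (hy : p • y = 0) :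
    ∃ c : ZMod p, sigma p c = y := by
  rcases mkQ_surjective (y : QModZ) with ⟨q, hq⟩
  have h0 : mkQ ((p : ℕ) * q) = 0 := by
    rw [← nsmul_mkQ, hq]
    have := congrArg Subtype.val hy
    push_cast at this
    exact this
  rcases mkQ_eq_zero.mp h0 with ⟨z, hzq⟩
  have hq' : q = (z : ℚ) * (1 / p) := by
    rw [mul_one_div, eq_div_iff (hpQ p), mul_comm, ← hzq]
  refine ⟨(z : ZMod p), Subtype.ext ?_⟩
  rw [sigma_coe]
  show (z • gp p : PruferGroup p).1 = _
  push_cast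
  show z • mkQ (1 / p) = _
  rw [zsmul_mkQ, ← hq', hq]

end PruferAux


open PruferAux

/-- If `D` is a divisible `p`-torsion abelian group and `Hom(ℤ/p, D)` is finite, then `D`
is isomorphic to a finite direct sum of copies of the Prüfer `p`-group `ℤ(p^∞)`. -/
theorem divisible_p_torsion_decomposition (p : ℕ) [Fact p.Prime] (D : Type*) [AddCommGroup D]
    (htor : ∀ x : D, ∃ n : ℕ, addOrderOf x = p ^ n)
    (hdiv : ∀ (x : D) (n : ℕ), 0 < n → ∃ y : D, n • y = x)
    (hfin : Finite (ZMod p →+ D)) :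
    ∃ k : ℕ, Nonempty (D ≃+ (Fin k → PruferGroup p)) := by
  classical
  have hp : Fact p.Prime := inferInstance
  set SD : AddSubgroup D := AddSubgroup.torsionBy D (p : ℕ) with hSDdef
  have hSDmem : ∀ x : D, x ∈ SD ↔ p • x = 0 := fun x => AddSubgroup.torsionBy.nsmul_iff
  have hSDsmul : ∀ x : SD, p • (x : D) = 0 := fun x => (hSDmem _).mp x.2
  -- SD is finite
  have hmap : ∀ x : SD, (zmultiplesHom D (x : D)) ((p : ℕ) : ℤ) = 0 := by
    intro x
    simp only [zmultiplesHom_apply]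
    rw [natCast_zsmul]
    exact hSDsmul x
  have hSDfin : Finite SD := by
    refine Finite.of_injective (fun x : SD => ZMod.lift p ⟨zmultiplesHom D (x : D), hmap x⟩) ?_
    intro x y h
    have h1 := congrArg (fun g => g (((1 : ℤ) : ZMod p))) h
    simp only [ZMod.lift_coe, zmultiplesHom_apply, one_zsmul] at h1
    exact Subtype.ext h1
  letI : Module (ZMod p) SD := AddSubgroup.torsionBy.zmodModule
  set k := Module.finrank (ZMod p) SD with hk
  let w : SD ≃ₗ[ZMod p] (Fin k → ZMod p) := (Module.finBasis (ZMod p) SD).equivFun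
  let wA : SD ≃+ (Fin k → ZMod p) := w.toAddEquiv
  let ρ : (Fin k → ZMod p) →+ (Fin k → PruferGroup p) :=
    AddMonoidHom.mk' (fun c i => sigma p (c i)) (by intro a b; funext i; simp)
  have ρinj : Function.Injective ρ := fun c d h =>
    funext fun i => sigma_injective p (congrFun h i)
  let φ : SD →+ (Fin k → PruferGroup p) := ρ.comp wA.toAddMonoidHom
  have φinj : Function.Injective φ := fun a b h => wA.injective (ρinj h)
  obtain ⟨f, hf⟩ := Module.Baer.extension_property_addMonoidHom
    (Module.Baer.of_divisible (Fin k → PruferGroup p)) SD.subtype Subtype.coe_injective φ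
  have hfs : ∀ s : SD, f (s : D) = φ s := fun s => DFunLike.congr_fun hf s
  -- injectivity
  have finj : Function.Injective f := by
    rw [injective_iff_map_eq_zero]
    intro x hx
    by_contra hx0
    obtain ⟨n, hn⟩ := htor x
    have hn0 : n ≠ 0 := by
      rintro rfl
      rw [pow_zero] at hn
      exact hx0 (AddMonoid.addOrderOf_eq_one_iff.mp hn)
    set z := p ^ (n - 1) • x with hzdef
    have hz0 : z ≠ 0 := by
      intro h
      have hd : addOrderOf x ∣ p ^ (n - 1) := addOrderOf_dvd_of_nsmul_eq_zero h
      rw [hn] at hd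
      have hle := Nat.le_of_dvd (pow_pos hp.out.pos _) hd
      have hlt : p ^ (n - 1) < p ^ n := Nat.pow_lt_pow_right hp.out.one_lt (by omega)
      omega
    have hzp : p • z = 0 := by
      rw [hzdef, smul_smul, show p * p ^ (n - 1) = p ^ n by
        rw [mul_comm, ← pow_succ]; congr 1; omega, ← hn]
      exact addOrderOf_nsmul_eq_zero x
    have hzS : z ∈ SD := (hSDmem z).mpr hzp
    have hfz : f z = 0 := by rw [hzdef, map_nsmul, hx, smul_zero]
    have hφz : φ ⟨z, hzS⟩ = 0 := by rw [← hfs ⟨z, hzS⟩]; exact hfz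
    have : (⟨z, hzS⟩ : SD) = 0 := φinj (by simpa using hφz)
    exact hz0 (by simpa using congrArg Subtype.val this)
  -- surjectivity
  have key : ∀ (N : ℕ) (y : Fin k → PruferGroup p), p ^ N • y = 0 → ∃ x, f x = y := by
    intro N
    induction N with
    | zero =>
      intro y hy
      rw [pow_zero, one_smul] at hy
      exact ⟨0, by rw [map_zero, hy]⟩
    | succ N ih =>
      intro y hy
      have h1 : p ^ N • (p • y) = 0 := by
        rw [smul_smul, ← pow_succ]
        exact hy
      obtain ⟨x, hx⟩ := ih (p • y) h1
      obtain ⟨x', hx'⟩ := hdiv x p hp.out.pos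
      have h2 : p • (y - f x') = 0 := by
        rw [smul_sub, ← map_nsmul, hx', hx, sub_self]
      have h3 : ∀ i, ∃ c : ZMod p, sigma p c = (y - f x') i := by
        intro i
        apply sigma_surj_on_torsion
        exact congrFun h2 i
      choose c hc using h3
      refine ⟨x' + ((wA.symm c : SD) : D), ?_⟩
      rw [map_add]
      have hρ : f ((wA.symm c : SD) : D) = ρ c := by
        rw [hfs (wA.symm c)]
        show ρ (wA (wA.symm c)) = ρ c
        rw [wA.apply_symm_apply]
      rw [hρ]
      have hρc : ρ c = y - f x' := funext hc
      rw [hρc]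
      abel
  have fsurj : Function.Surjective f := by
    intro y
    choose n hn using fun i => prufer_tors p (y i)
    refine key (Finset.univ.sup n) y ?_
    funext i
    have hle : n i ≤ Finset.univ.sup n := Finset.le_sup (Finset.mem_univ i)
    simp only [Pi.smul_apply, Pi.zero_apply]
    rw [show Finset.univ.sup n = (Finset.univ.sup n - n i) + n i by omega, pow_add,
      ← smul_smul, hn i, smul_zero]
  exact ⟨k, ⟨AddEquiv.ofBijective f ⟨finj, fsurj⟩⟩⟩
end

section
/- Let p be a prime and let P be a p-torsion abelian group with Hom(ℤ/p, P) finite. Then P contains a finite subgroup B which is a direct summand of P (i.e. P ≅ B ⊕ (P/B)) and whose quotient P/B is a divisible group. -/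
theorem aux_pdiv_all (p : ℕ) (hp : p.Prime) {Q : Type*} [AddCommGroup Q]
    (htor : ∀ x : Q, ∃ n : ℕ, p ^ n • x = 0)
    (hdiv : ∀ x : Q, ∃ y : Q, p • y = x) :
    ∀ (x : Q) (n : ℕ), 0 < n → ∃ y, n • y = x := by
  have hpa : ∀ (a : ℕ) (x : Q), ∃ y, p ^ a • y = x := by
    intro a
    induction a with
    | zero => intro x; exact ⟨x, by simp⟩
    | succ a ih =>
      intro x
      obtain ⟨y1, hy1⟩ := hdiv x
      obtain ⟨y2, hy2⟩ := ih y1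
      exact ⟨y2, by rw [pow_succ', mul_smul, hy2, hy1]⟩
  have hm : ∀ (x : Q) (m : ℕ), ¬ p ∣ m → ∃ z, m • z = x := by
    intro x m hmp
    obtain ⟨e, he⟩ := htor x
    have hcop : Nat.Coprime m (p ^ e) :=
      ((Nat.Prime.coprime_iff_not_dvd hp).mpr hmp).symm.pow_right e
    have hbez := Nat.gcd_eq_gcd_ab m (p ^ e)
    rw [Nat.Coprime.gcd_eq_one hcop] at hbez
    refine ⟨(Nat.gcdA m (p ^ e)) • x, ?_⟩
    have : (m : ℤ) • ((Nat.gcdA m (p ^ e)) • x) = x := by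
      rw [smul_smul]
      have : ((m : ℤ) * Nat.gcdA m (p ^ e)) • x
          = (1 : ℤ) • x - ((p ^ e : ℕ) : ℤ) • ((Nat.gcdB m (p ^ e)) • x) := by
        rw [smul_smul, ← sub_smul]
        congr 1
        push_cast at hbez ⊢
        linarith
      rw [this, natCast_zsmul, smul_comm, he, smul_zero, sub_zero, one_smul]
    rw [← natCast_zsmul]
    exact this
  intro x n hn
  have hfact := Nat.ordProj_mul_ordCompl_eq_self n p
  obtain ⟨y1, hy1⟩ := hpa (n.factorization p) x
  obtain ⟨z, hz⟩ := hm y1 (n / p ^ n.factorization p) (Nat.not_dvd_ordCompl hp hn.ne')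
  refine ⟨z, ?_⟩
  rw [← hfact, mul_smul, hz, hy1]

/-- The `k`-multiplication homomorphism on an additive commutative group. -/
def auxSmulHom {P : Type*} [AddCommGroup P] (k : ℕ) : P →+ P :=
  AddMonoidHom.mk' (fun x => k • x) (fun a b => smul_add k a b)

@[simp] lemma auxSmulHom_apply {P : Type*} [AddCommGroup P] (k : ℕ) (x : P) :
    auxSmulHom k x = k • x := rfl

/-- If `P` is a `p`-torsion abelian group with `Hom(ℤ/p, P)` finite, then `P` has a finite
subgroup `B` which is a direct summand of `P` and such that the quotient `P/B` is a
divisible group. -/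
theorem exists_finite_summand_with_divisible_quotient (p : ℕ) [Fact p.Prime]
    (P : Type*) [AddCommGroup P]
    (htor : ∀ x : P, ∃ n : ℕ, addOrderOf x = p ^ n)
    (hfin : Finite (ZMod p →+ P)) :
    ∃ B : AddSubgroup P, Finite B ∧ (∃ C : AddSubgroup P, IsCompl B C) ∧
      ∀ (x : P ⧸ B) (n : ℕ), 0 < n → ∃ y : P ⧸ B, n • y = x := by
  classical
  have hp : p.Prime := Fact.out
  -- torsion in smul form
  have htor' : ∀ x : P, ∃ n : ℕ, p ^ n • x = 0 := by
    intro x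
    obtain ⟨n, hn⟩ := htor x
    exact ⟨n, by rw [← hn]; exact addOrderOf_nsmul_eq_zero x⟩
  -- the socle is finite
  set S : Set P := {x : P | p • x = 0} with hSdef
  have hS : S.Finite := by
    have : S ⊆ Set.range (fun f : (ZMod p →+ P) => f 1) := by
      intro x hx
      have hx' : (zmultiplesHom P x) (p : ℤ) = 0 := by
        have hx0 : p • x = 0 := hx
        rw [zmultiplesHom_apply, natCast_zsmul]
        exact hx0
      refine ⟨ZMod.lift p ⟨zmultiplesHom P x, hx'⟩, ?_⟩
      show ZMod.lift p ⟨zmultiplesHom P x, hx'⟩ (1 : ZMod p) = x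
      have h1 : ((1 : ℤ) : ZMod p) = (1 : ZMod p) := by push_cast; rfl
      rw [← h1, ZMod.lift_coe, zmultiplesHom_apply, one_zsmul]
    exact (Set.finite_range _).subset this
  -- the groups P[p^n] are finite
  have hT : ∀ n : ℕ, {x : P | p ^ n • x = 0}.Finite := by
    intro n
    induction n with
    | zero => simp
    | succ n ih =>
      have hsub : {x : P | p ^ (n+1) • x = 0} ⊆
          ⋃ y ∈ {x : P | p ^ n • x = 0}, {x : P | p • x = y} := by
        intro x hx
        refine Set.mem_biUnion (show p ^ n • (p • x) = 0 from ?_) rfl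
        rw [smul_smul, ← pow_succ]
        exact hx
      refine (Set.Finite.biUnion ih ?_).subset hsub
      intro y _
      rcases Set.eq_empty_or_nonempty {x : P | p • x = y} with h | ⟨x₀, hx₀⟩
      · simp [h]
      · have : {x : P | p • x = y} ⊆ (fun s => x₀ + s) '' S := by
          intro x hx
          have hx1 : p • x = y := hx
          have hx2 : p • x₀ = y := hx₀
          refine ⟨x - x₀, ?_, show x₀ + (x - x₀) = x by abel⟩
          show p • (x - x₀) = 0
          rw [smul_sub, hx1, hx2, sub_self]
        exact ((hS.image _).subset this)
  -- the descending chain S ∩ p^n P stabilizes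
  set A : ℕ → Set P := fun n => S ∩ Set.range (fun y : P => p ^ n • y) with hAdef
  have hAfin : ∀ n, (A n).Finite := fun n => hS.subset Set.inter_subset_left
  have hAanti : ∀ m n, m ≤ n → A n ⊆ A m := by
    intro m n hmn x hx
    obtain ⟨hxS, y, hy⟩ := hx
    refine ⟨hxS, p ^ (n - m) • y, ?_⟩
    simp only [smul_smul, ← pow_add]
    rw [← Nat.add_sub_cancel' hmn] at hy
    simpa [pow_add, mul_smul] using hy
  obtain ⟨N, hN⟩ : ∃ N : ℕ, ∀ n, N ≤ n → A n = A N := by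
    have hmem : ∃ k, k ∈ Set.range (fun n => (A n).ncard) := ⟨_, 0, rfl⟩
    obtain ⟨N, hNeq⟩ := Nat.sInf_mem hmem
    refine ⟨N, fun n hn => ?_⟩
    refine Set.eq_of_subset_of_ncard_le (hAanti N n hn) ?_ (hAfin N)
    have hNeq' : (A N).ncard = sInf (Set.range fun n => (A n).ncard) := hNeq
    rw [hNeq']
    exact Nat.sInf_le ⟨n, rfl⟩
  -- the divisible part D = p^N P
  set D : AddSubgroup P := (auxSmulHom (p ^ N) : P →+ P).range with hDdef
  have hmemD : ∀ x : P, x ∈ D ↔ ∃ y : P, p ^ N • y = x := by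
    intro x; constructor
    · rintro ⟨y, hy⟩; exact ⟨y, hy⟩
    · rintro ⟨y, hy⟩; exact ⟨y, hy⟩
  -- D is p-divisible
  have hDdiv : ∀ x ∈ D, ∃ y ∈ D, p • y = x := by
    have key : ∀ m : ℕ, ∀ x ∈ D, p ^ m • x = 0 → ∃ y ∈ D, p • y = x := by
      intro m
      induction m with
      | zero => intro x _ hx; exact ⟨0, zero_mem D, by simpa using hx.symm⟩
      | succ m ih =>
        intro x hxD hx
        obtain ⟨z, hz⟩ := (hmemD x).mp hxD
        have hsA : p ^ m • x ∈ A (N + m) := by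
          refine ⟨?_, z, ?_⟩
          · show p • p ^ m • x = 0
            rw [smul_smul, ← pow_succ']
            exact hx
          · show p ^ (N + m) • z = p ^ m • x
            rw [← hz, smul_smul, ← pow_add, add_comm m N]
        rw [hN (N + m) (Nat.le_add_right N m), ← hN (N + m + 1) (by omega)] at hsA
        obtain ⟨_, w, hw⟩ := hsA
        have hdD : p ^ N • w ∈ D := (hmemD _).mpr ⟨w, rfl⟩
        have hw' : p ^ (N + m + 1) • w = p ^ m • x := hw
        have hcalc : p ^ m • p • p ^ N • w = p ^ (N + m + 1) • w := by
          rw [smul_smul, smul_smul, show p ^ m * p * p ^ N = p ^ (N + m + 1) by ring]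
        have hxd : p ^ m • (x - p • p ^ N • w) = 0 := by
          rw [smul_sub, hcalc, hw', sub_self]
        have hxdD : x - p • p ^ N • w ∈ D :=
          sub_mem hxD (AddSubgroup.nsmul_mem D hdD p)
        obtain ⟨y', hy'D, hy'⟩ := ih _ hxdD hxd
        refine ⟨y' + p ^ N • w, add_mem hy'D hdD, ?_⟩
        rw [smul_add, hy']
        abel
    intro x hx
    obtain ⟨m, hm⟩ := htor' x
    exact key m x hx hm
  -- D is divisible by every positive integer (as a group in its own right)
  have hDtor : ∀ x : ↥D, ∃ n : ℕ, p ^ n • x = 0 := by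
    intro x
    obtain ⟨n, hn⟩ := htor' (x : P)
    exact ⟨n, Subtype.ext (by simpa using hn)⟩
  have hDpdiv : ∀ x : ↥D, ∃ y : ↥D, p • y = x := by
    rintro ⟨x, hx⟩
    obtain ⟨y, hyD, hy⟩ := hDdiv x hx
    exact ⟨⟨y, hyD⟩, Subtype.ext (by simpa using hy)⟩
  have hDall := aux_pdiv_all p hp hDtor hDpdiv
  have hDint : ∀ (x : ↥D) (z : ℤ), z ≠ 0 → ∃ y : ↥D, z • y = x := by
    intro x z hz
    obtain ⟨y, hy⟩ := hDall x z.natAbs (Int.natAbs_pos.mpr hz)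
    rcases Int.natAbs_eq z with h | h
    · exact ⟨y, by rw [h, natCast_zsmul, hy]⟩
    · exact ⟨-y, by rw [h, neg_smul, smul_neg, neg_neg, natCast_zsmul, hy]⟩
  haveI : DivisibleBy ↥D ℤ :=
    { div := fun x z => if h : z = 0 then 0 else Classical.choose (hDint x z h)
      div_zero := fun x => dif_pos rfl
      div_cancel := fun {z} x h => by
        show z • (if hz : z = 0 then 0 else Classical.choose (hDint x z hz)) = x
        rw [dif_neg h]
        exact Classical.choose_spec (hDint x z h) }
  have hBaer : Module.Baer ℤ ↥D := Module.Baer.of_divisible ↥D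
  obtain ⟨r, hr⟩ := hBaer.extension_property_addMonoidHom D.subtype Subtype.coe_injective
    (AddMonoidHom.id ↥D)
  have hrid : ∀ d : ↥D, r (d : P) = d := fun d => DFunLike.congr_fun hr d
  set B : AddSubgroup P := r.ker with hBdef
  have hmemB : ∀ x : P, x ∈ B ↔ r x = 0 := fun x => Iff.rfl
  -- B ∩ D = 0
  have hBD : ∀ x : P, x ∈ B → x ∈ D → x = 0 := by
    intro x hxB hxD
    have := hrid ⟨x, hxD⟩
    rw [(hmemB x).mp hxB] at this
    simpa using congrArg Subtype.val this.symm
  -- B is finite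
  have hBfin : Finite B := by
    have hsub : (B : Set P) ⊆ {x : P | p ^ N • x = 0} := by
      intro x hx
      have h1 : p ^ N • x ∈ B := AddSubgroup.nsmul_mem B hx (p ^ N)
      have h2 : p ^ N • x ∈ D := (hmemD _).mpr ⟨x, rfl⟩
      exact hBD _ h1 h2
    exact ((hT N).subset hsub).to_subtype
  -- B and D are complementary
  have hcompl : IsCompl B D := by
    constructor
    · rw [disjoint_iff]
      refine (AddSubgroup.eq_bot_iff_forall _).mpr fun x hx => ?_
      exact hBD x hx.1 hx.2
    · rw [codisjoint_iff]
      refine (AddSubgroup.eq_top_iff' _).mpr fun x => ?_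
      rw [AddSubgroup.mem_sup]
      refine ⟨x - (r x : P), ?_, (r x : P), (r x).2, by abel⟩
      show r (x - (r x : P)) = 0
      rw [map_sub, hrid (r x), sub_self]
  refine ⟨B, hBfin, ⟨D, hcompl⟩, ?_⟩
  -- the quotient P/B is divisible
  refine aux_pdiv_all p hp ?_ ?_
  · intro x
    induction x using QuotientAddGroup.induction_on with
    | H x =>
      obtain ⟨n, hn⟩ := htor' x
      exact ⟨n, by rw [← QuotientAddGroup.mk_nsmul, hn, QuotientAddGroup.mk_zero]⟩
  · intro x
    induction x using QuotientAddGroup.induction_on with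
    | H x =>
      have hxmem : x - (r x : P) ∈ B := by
        show r (x - (r x : P)) = 0
        rw [map_sub, hrid (r x), sub_self]
      have hxeq : (QuotientAddGroup.mk x : P ⧸ B) = QuotientAddGroup.mk (r x : P) := by
        rw [QuotientAddGroup.eq]
        simpa [neg_add_eq_sub] using AddSubgroup.neg_mem B hxmem
      obtain ⟨y, hyD, hy⟩ := hDdiv (r x : P) (r x).2
      refine ⟨QuotientAddGroup.mk y, ?_⟩
      rw [hxeq, ← hy, QuotientAddGroup.mk_nsmul]
end

section
/- Let A be a locally compact Hausdorff topological space with a chosen base point a₀, and let Y be a topological space. Suppose the evaluation map ev : C(A, Y) → Y, ev(f) = f(a₀), from the space of continuous maps with the compact-open topology, is a homotopy equivalence. Then for every n ≥ 1 the evaluation map C(Aⁿ, Y) → Y at the point (a₀, …, a₀) ∈ Aⁿ (where Aⁿ carries the product topology) is also a homotopy equivalence. -/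
open ContinuousMap

/-- A continuous map is a homotopy equivalence if it admits a continuous map in the
other direction such that both composites are homotopic to the identity. -/
def IsHomotopyEquiv {Z W : Type*} [TopologicalSpace Z] [TopologicalSpace W]
    (f : C(Z, W)) : Prop :=
  ∃ g : C(W, Z), (g.comp f).Homotopic (ContinuousMap.id Z) ∧
    (f.comp g).Homotopic (ContinuousMap.id W)

section Aux

variable {Z W V : Type*} [TopologicalSpace Z] [TopologicalSpace W] [TopologicalSpace V]

/-- Composition of homotopy equivalences. -/
lemma IsHomotopyEquiv.comp' {g : C(W, V)} {f : C(Z, W)}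
    (hg : IsHomotopyEquiv g) (hf : IsHomotopyEquiv f) : IsHomotopyEquiv (g.comp f) := by
  obtain ⟨g', hg1, hg2⟩ := hg
  obtain ⟨f', hf1, hf2⟩ := hf
  refine ⟨f'.comp g', ?_, ?_⟩
  · have e1 : (f'.comp g').comp (g.comp f) = f'.comp ((g'.comp g).comp f) := by
      ext x; rfl
    rw [e1]
    have h1 : ((g'.comp g).comp f).Homotopic ((ContinuousMap.id W).comp f) :=
      hg1.comp (ContinuousMap.Homotopic.refl f)
    have h2 : (f'.comp ((g'.comp g).comp f)).Homotopic (f'.comp ((ContinuousMap.id W).comp f)) :=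
      (ContinuousMap.Homotopic.refl f').comp h1
    rw [ContinuousMap.id_comp] at h2
    exact h2.trans hf1
  · have e1 : (g.comp f).comp (f'.comp g') = g.comp ((f.comp f').comp g') := by
      ext x; rfl
    rw [e1]
    have h1 : ((f.comp f').comp g').Homotopic ((ContinuousMap.id W).comp g') :=
      hf2.comp (ContinuousMap.Homotopic.refl g')
    have h2 : (g.comp ((f.comp f').comp g')).Homotopic (g.comp ((ContinuousMap.id W).comp g')) :=
      (ContinuousMap.Homotopic.refl g).comp h1
    rw [ContinuousMap.id_comp] at h2
    exact h2.trans hg2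

/-- A homeomorphism is a homotopy equivalence. -/
lemma isHomotopyEquiv_homeomorph (e : Z ≃ₜ W) : IsHomotopyEquiv (e : C(Z, W)) := by
  refine ⟨(e.symm : C(W, Z)), ?_, ?_⟩
  · have : ((e.symm : C(W, Z)).comp (e : C(Z, W))) = ContinuousMap.id Z := by
      ext x; simp
    rw [this]
  · have : ((e : C(Z, W)).comp (e.symm : C(W, Z))) = ContinuousMap.id W := by
      ext x; simp
    rw [this]

end Aux

section PostComp

variable {B X X' : Type*} [TopologicalSpace B] [TopologicalSpace X] [TopologicalSpace X']

/-- Postcomposition as a continuous map. -/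
def postComp (B : Type*) [TopologicalSpace B] (f : C(X, X')) : C(C(B, X), C(B, X')) :=
  ⟨fun u => f.comp u, f.continuous_postcomp⟩

lemma postComp_comp {X'' : Type*} [TopologicalSpace X''] (f : C(X', X'')) (g : C(X, X')) :
    (postComp B f).comp (postComp B g) = postComp B (f.comp g) := by
  ext u; rfl

lemma postComp_id : postComp B (ContinuousMap.id X) = ContinuousMap.id C(B, X) := by
  ext u; rfl

/-- Homotopic maps induce homotopic postcomposition maps (for `B` locally compact). -/
lemma Homotopic.postComp [LocallyCompactSpace B] {f g : C(X, X')}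
    (h : f.Homotopic g) : (postComp B f).Homotopic (postComp B g) := by
  obtain ⟨F⟩ := h
  refine ⟨⟨ContinuousMap.curry ⟨fun p => F (p.1.1, p.1.2 p.2), ?_⟩, ?_, ?_⟩⟩
  · exact F.continuous.comp <| (continuous_fst.comp continuous_fst).prodMk <|
      continuous_eval.comp <| (continuous_snd.comp continuous_fst).prodMk continuous_snd
  · intro u; ext b
    show F (0, u b) = f (u b)
    exact F.apply_zero _
  · intro u; ext b
    show F (1, u b) = g (u b)
    exact F.apply_one _

/-- Postcomposition by a homotopy equivalence is a homotopy equivalence. -/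
lemma IsHomotopyEquiv.postComp [LocallyCompactSpace B] {f : C(X, X')}
    (h : IsHomotopyEquiv f) : IsHomotopyEquiv (postComp B f) := by
  obtain ⟨g, h1, h2⟩ := h
  refine ⟨_root_.postComp B g, ?_, ?_⟩
  · rw [postComp_comp]
    have := Homotopic.postComp (B := B) h1
    rwa [postComp_id] at this
  · rw [postComp_comp]
    have := Homotopic.postComp (B := B) h2
    rwa [postComp_id] at this

end PostComp

/-- The homeomorphism `(Fin (n+1) → A) ≃ₜ A × (Fin n → A)`. -/
def finSuccHomeo (n : ℕ) (A : Type*) [TopologicalSpace A] :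
    (Fin (n + 1) → A) ≃ₜ A × (Fin n → A) where
  toFun f := (f 0, fun i => f i.succ)
  invFun p := Fin.cons p.1 p.2
  left_inv f := by
    funext i
    refine Fin.cases ?_ (fun j => ?_) i <;> simp
  right_inv p := by
    ext <;> simp
  continuous_toFun :=
    (continuous_apply 0).prodMk (continuous_pi fun i => continuous_apply i.succ)
  continuous_invFun := continuous_pi fun i => by
    refine Fin.cases ?_ (fun j => ?_) i
    · simpa using continuous_fst
    · simpa using (show Continuous fun p : A × (Fin n → A) => p.2 j by fun_prop)

/-- If `A` is locally compact Hausdorff with base point `a₀` and evaluation at `a₀` is a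
homotopy equivalence `C(A, Y) → Y`, then for every `n ≥ 1` the evaluation at
`(a₀, …, a₀)` from `C(Aⁿ, Y)` to `Y` is also a homotopy equivalence. -/
theorem isHomotopyEquiv_eval_pi {A Y : Type*} [TopologicalSpace A] [TopologicalSpace Y]
    [LocallyCompactSpace A] [T2Space A] (a₀ : A)
    (h : IsHomotopyEquiv (⟨fun f : C(A, Y) => f a₀, continuous_eval_const a₀⟩ : C(C(A, Y), Y))) :
    ∀ n : ℕ, 1 ≤ n →
      IsHomotopyEquiv (⟨fun f : C((Fin n → A), Y) => f (fun _ => a₀),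
        continuous_eval_const (fun _ => a₀)⟩ : C(C((Fin n → A), Y), Y)) := by
  intro n hn
  induction n, hn using Nat.le_induction with
  | base =>
    -- C(Fin 1 → A, Y) ≃ₜ C(A, Y) via funUnique
    set e : (Fin 1 → A) ≃ₜ A := Homeomorph.funUnique (Fin 1) A
    set Φ : C(C(Fin 1 → A, Y), C(A, Y)) :=
      (e.arrowCongr (Homeomorph.refl Y) : C(C(Fin 1 → A, Y), C(A, Y)))
    have key : (⟨fun f : C((Fin 1 → A), Y) => f (fun _ => a₀),
        continuous_eval_const (fun _ => a₀)⟩ : C(C((Fin 1 → A), Y), Y)) =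
        (⟨fun f : C(A, Y) => f a₀, continuous_eval_const a₀⟩ : C(C(A, Y), Y)).comp Φ := by
      ext f
      show f (fun _ => a₀) = f (e.symm a₀)
      rfl
    rw [key]
    exact h.comp' (isHomotopyEquiv_homeomorph (e.arrowCongr (Homeomorph.refl Y)))
  | succ n hn ih =>
    set e : (Fin (n + 1) → A) ≃ₜ (Fin n → A) × A :=
      (finSuccHomeo n A).trans (Homeomorph.prodComm A (Fin n → A))
    -- precompose with e.symm : C(Fin (n+1) → A, Y) ≃ₜ C((Fin n → A) × A, Y)
    set Φ₁ : C(C(Fin (n + 1) → A, Y), C((Fin n → A) × A, Y)) :=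
      (e.arrowCongr (Homeomorph.refl Y) : C(C(Fin (n + 1) → A, Y), C((Fin n → A) × A, Y)))
    set Φ₂ : C(C((Fin n → A) × A, Y), C(Fin n → A, C(A, Y))) :=
      ((Homeomorph.curry : C((Fin n → A) × A, Y) ≃ₜ C(Fin n → A, C(A, Y))) : C(C((Fin n → A) × A, Y), C(Fin n → A, C(A, Y))))
    set P : C(C(Fin n → A, C(A, Y)), C(Fin n → A, Y)) :=
      postComp (Fin n → A) (⟨fun f : C(A, Y) => f a₀, continuous_eval_const a₀⟩ : C(C(A, Y), Y))
    set evn : C(C(Fin n → A, Y), Y) :=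
      (⟨fun f : C((Fin n → A), Y) => f (fun _ => a₀),
        continuous_eval_const (fun _ => a₀)⟩ : C(C((Fin n → A), Y), Y))
    have hconst : e.symm ((fun _ => a₀ : Fin n → A), a₀) = fun _ => a₀ := by
      funext i
      refine Fin.cases ?_ (fun j => ?_) i <;>
        simp [e, finSuccHomeo, Homeomorph.trans, Homeomorph.prodComm]
    have key : (⟨fun f : C((Fin (n + 1) → A), Y) => f (fun _ => a₀),
        continuous_eval_const (fun _ => a₀)⟩ : C(C((Fin (n + 1) → A), Y), Y)) =
        evn.comp (P.comp (Φ₂.comp Φ₁)) := by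
      ext f
      show f (fun _ => a₀) = _
      simp only [ContinuousMap.comp_apply]
      show f (fun _ => a₀) = (Φ₂ (Φ₁ f)) (fun _ => a₀) a₀
      show f (fun _ => a₀) = (Φ₁ f) ((fun _ => a₀ : Fin n → A), a₀)
      show f (fun _ => a₀) = f (e.symm ((fun _ => a₀ : Fin n → A), a₀))
      rw [hconst]
    rw [key]
    exact ih.comp' <| (IsHomotopyEquiv.postComp h).comp' <|
      (isHomotopyEquiv_homeomorph Homeomorph.curry).comp' (isHomotopyEquiv_homeomorph _)
end
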